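/- Let K be a spherically complete valued field of equi-characteristic 0, B ⊆ Kⁿ a ball, X ⊆ Kⁿ a set, W ⊆ Kⁿ a vector subspace, ψ : B → B a W-straightener of X on B, and λ an element of the value group. Then ψ is also a W-straightener on B of the tubular neighbourhood X'' := X + B_{≤λ}(0) = {y ∈ Kⁿ : ∃x ∈ X, |x − y| ≤ λ}. -/

import Mathlib

/-- The sup-norm on `Kⁿ` induced by a valuation `v : K → Γ₀`. -/
noncomputable def supVal {K Γ₀ : Type*} [Field K] [LinearOrderedCommGroupWithZero Γ₀]
    (v : Valuation K Γ₀) {n : ℕ} (x : Fin n → K) : Γ₀ :=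
  letI : OrderBot Γ₀ := { bot := 0, bot_le := fun _ => zero_le' }
  Finset.univ.sup fun i => v (x i)

/-- A (valuative) ball in `K`. -/
def IsBall1 {K Γ₀ : Type*} [Field K] [LinearOrderedCommGroupWithZero Γ₀]
    (v : Valuation K Γ₀) (B : Set K) : Prop :=
  B.Infinite ∧ ∀ x ∈ B, ∀ x' ∈ B, ∀ y : K, v (x - y) ≤ v (x - x') → y ∈ B

/-- A (valuative) ball in `Kⁿ` with respect to the sup-norm. -/
def IsBall {K Γ₀ : Type*} [Field K] [LinearOrderedCommGroupWithZero Γ₀]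
    (v : Valuation K Γ₀) {n : ℕ} (B : Set (Fin n → K)) : Prop :=
  B.Infinite ∧ ∀ x ∈ B, ∀ x' ∈ B, ∀ y : Fin n → K,
    supVal v (x - y) ≤ supVal v (x - x') → y ∈ B

/-- `K` is spherically complete. -/
def SphericallyComplete {K Γ₀ : Type*} [Field K] [LinearOrderedCommGroupWithZero Γ₀]
    (v : Valuation K Γ₀) : Prop :=
  ∀ C : Set (Set K), C.Nonempty → (∀ B ∈ C, IsBall1 v B) →
    IsChain (· ⊆ ·) C → (⋂₀ C).Nonempty

/-- A risometry from `B₁` onto `B₂`. -/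
def IsRisometryOn {K Γ₀ : Type*} [Field K] [LinearOrderedCommGroupWithZero Γ₀]
    (v : Valuation K Γ₀) {n : ℕ} (φ : (Fin n → K) → (Fin n → K))
    (B₁ B₂ : Set (Fin n → K)) : Prop :=
  Set.BijOn φ B₁ B₂ ∧
    ∀ x₁ ∈ B₁, ∀ x₂ ∈ B₁, x₁ ≠ x₂ →
      supVal v (φ x₁ - φ x₂ - (x₁ - x₂)) < supVal v (x₁ - x₂)


/-!
A risometry preserves the ultrametric distance. Suppose `ψ x` lies within `λ` of a point `x₀ ∈ X`
and `x - x' ∈ W`. If `|x - x'| ≤ λ`, then `ψ x'` is within `λ` of `x₀` as well. Otherwise `x₀` is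
closer to `ψ x` than `ψ x'` is, so `x₀ = ψ z` for some `z ∈ B` with `|z - x| ≤ λ`; the translate
`w = z + (x' - x)` lies in `B`, `ψ w ∈ X` because `ψ⁻¹ X` is `W`-invariant, and `ψ w` is within
`λ` of `ψ x'`.
-/

section SupVal

variable {K Γ₀ : Type*} [Field K] [LinearOrderedCommGroupWithZero Γ₀]
  (v : Valuation K Γ₀) {n : ℕ}

theorem le_supVal (x : Fin n → K) (i : Fin n) : v (x i) ≤ supVal v x := by
  let : OrderBot Γ₀ := { bot := 0, bot_le := fun _ => zero_le }
  exact Finset.le_sup (f := fun j => v (x j)) (Finset.mem_univ i)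

theorem supVal_le_iff {x : Fin n → K} {c : Γ₀} : supVal v x ≤ c ↔ ∀ i, v (x i) ≤ c := by
  let : OrderBot Γ₀ := { bot := 0, bot_le := fun _ => zero_le }
  exact Finset.sup_le_iff.trans (by simp)

theorem supVal_neg (x : Fin n → K) : supVal v (-x) = supVal v x := by
  simp only [supVal, Pi.neg_apply, Valuation.map_neg]

theorem supVal_sub_comm (x y : Fin n → K) : supVal v (x - y) = supVal v (y - x) := by
  rw [← supVal_neg v (y - x), neg_sub]

theorem supVal_add_le (x y : Fin n → K) :
    supVal v (x + y) ≤ max (supVal v x) (supVal v y) :=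
  (supVal_le_iff v).mpr fun i =>
    (v.map_add (x i) (y i)).trans (max_le_max (le_supVal v x i) (le_supVal v y i))

theorem supVal_sub_le (x y z : Fin n → K) :
    supVal v (x - z) ≤ max (supVal v (x - y)) (supVal v (y - z)) := by
  simpa using supVal_add_le v (x - y) (y - z)

theorem supVal_add_eq_of_lt {x y : Fin n → K} (h : supVal v y < supVal v x) :
    supVal v (x + y) = supVal v x := by
  refine le_antisymm ((supVal_add_le v x y).trans (max_le le_rfl h.le)) ?_
  have hx : supVal v x ≤ max (supVal v (x + y)) (supVal v y) := by
    simpa [supVal_neg] using supVal_add_le v (x + y) (-y)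
  exact (le_max_iff.mp hx).resolve_right h.not_ge

end SupVal

section Risometry

variable {K Γ₀ : Type*} [Field K] [LinearOrderedCommGroupWithZero Γ₀]
  {v : Valuation K Γ₀} {n : ℕ} {φ : (Fin n → K) → (Fin n → K)} {B₁ B₂ : Set (Fin n → K)}

theorem IsRisometryOn.supVal_sub_eq (hφ : IsRisometryOn v φ B₁ B₂) {x₁ x₂ : Fin n → K}
    (h₁ : x₁ ∈ B₁) (h₂ : x₂ ∈ B₁) : supVal v (φ x₁ - φ x₂) = supVal v (x₁ - x₂) := by
  obtain rfl | hne := eq_or_ne x₁ x₂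
  · simp
  simpa using supVal_add_eq_of_lt v (hφ.2 x₁ h₁ x₂ h₂ hne)

theorem IsRisometryOn.exists_near_of_exists_near {B X D : Set (Fin n → K)} (hB : IsBall v B)
    (hφ : IsRisometryOn v φ B B)
    (hinv : ∀ z ∈ B, ∀ w ∈ B, z - w ∈ D → φ z ∈ X → φ w ∈ X)
    {lam : Γ₀} {x x' : Fin n → K} (hx : x ∈ B) (hx' : x' ∈ B) (hD : x - x' ∈ D)
    {x₀ : Fin n → K} (hx₀X : x₀ ∈ X) (hx₀ : supVal v (x₀ - φ x) ≤ lam) :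
    ∃ y ∈ X, supVal v (y - φ x') ≤ lam := by
  have hdist := hφ.supVal_sub_eq hx hx'
  obtain hnear | hfar := le_or_gt (supVal v (x - x')) lam
  · exact ⟨x₀, hx₀X, (supVal_sub_le v x₀ (φ x) (φ x')).trans (max_le hx₀ (hdist ▸ hnear))⟩
  have hx₀B : x₀ ∈ B := hB.2 (φ x) (hφ.1.mapsTo hx) (φ x') (hφ.1.mapsTo hx') x₀ <| by
    rw [supVal_sub_comm, hdist]
    exact (hx₀.trans_lt hfar).le
  obtain ⟨z, hzB, rfl⟩ := hφ.1.surjOn hx₀B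
  have hzx : supVal v (z - x) ≤ lam := hφ.supVal_sub_eq hzB hx ▸ hx₀
  have hwx' : z + (x' - x) - x' = z - x := by abel
  have hwB : z + (x' - x) ∈ B := hB.2 x' hx' x hx _ <| by
    rw [supVal_sub_comm, hwx', supVal_sub_comm v x']
    exact (hzx.trans_lt hfar).le
  refine ⟨φ (z + (x' - x)), hinv z hzB _ hwB (by simpa using hD) hx₀X, ?_⟩
  rwa [hφ.supVal_sub_eq hwB hx', hwx']

end Risometry

theorem straightener_of_tubular_neighbourhood_general {K Γ₀ : Type*} [Field K]
    [LinearOrderedCommGroupWithZero Γ₀] (v : Valuation K Γ₀)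
    {n : ℕ} (B : Set (Fin n → K)) (hB : IsBall v B)
    (X : Set (Fin n → K)) (W : Submodule K (Fin n → K))
    (ψ : (Fin n → K) → (Fin n → K)) (hψ : IsRisometryOn v ψ B B)
    (hstraight : ∀ x ∈ B, ∀ x' ∈ B, x - x' ∈ W → (ψ x ∈ X ↔ ψ x' ∈ X))
    (lam : Γ₀) :
    ∀ x ∈ B, ∀ x' ∈ B, x - x' ∈ W →
      (ψ x ∈ {y | ∃ x₀ ∈ X, supVal v (x₀ - y) ≤ lam} ↔
        ψ x' ∈ {y | ∃ x₀ ∈ X, supVal v (x₀ - y) ≤ lam}) := by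
  intro x hx x' hx' hW
  have hW' : x' - x ∈ W := by simpa using W.neg_mem hW
  have hinv : ∀ z ∈ B, ∀ w ∈ B, z - w ∈ (W : Set (Fin n → K)) → ψ z ∈ X → ψ w ∈ X :=
    fun z hz w hw hzw => (hstraight z hz w hw hzw).mp
  exact ⟨fun ⟨x₀, hx₀X, hx₀⟩ => hψ.exists_near_of_exists_near hB hinv hx hx' hW hx₀X hx₀,
    fun ⟨x₀, hx₀X, hx₀⟩ => hψ.exists_near_of_exists_near hB hinv hx' hx hW' hx₀X hx₀⟩

/-- a `W`-straightener of `X` on a ball `B` (over a spherically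
complete valued field of equi-characteristic 0) is also a `W`-straightener of the
tubular neighbourhood `X'' = X + B_{≤λ}(0) = {y : ∃ x ∈ X, |x − y| ≤ λ}`. -/
theorem straightener_of_tubular_neighbourhood {K Γ₀ : Type*} [Field K]
    [LinearOrderedCommGroupWithZero Γ₀] (v : Valuation K Γ₀) [CharZero K]
    (hres : ∀ m : ℕ, m ≠ 0 → v (m : K) = 1) (hsph : SphericallyComplete v)
    {n : ℕ} (B : Set (Fin n → K)) (hB : IsBall v B)
    (X : Set (Fin n → K)) (W : Submodule K (Fin n → K))
    (ψ : (Fin n → K) → (Fin n → K)) (hψ : IsRisometryOn v ψ B B)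
    (hstraight : ∀ x ∈ B, ∀ x' ∈ B, x - x' ∈ W → (ψ x ∈ X ↔ ψ x' ∈ X))
    (lam : Γ₀) :
    ∀ x ∈ B, ∀ x' ∈ B, x - x' ∈ W →
      (ψ x ∈ {y | ∃ x₀ ∈ X, supVal v (x₀ - y) ≤ lam} ↔
        ψ x' ∈ {y | ∃ x₀ ∈ X, supVal v (x₀ - y) ≤ lam}) :=
  straightener_of_tubular_neighbourhood_general v B hB X W ψ hψ hstraight lam
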